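/- (Joint limit for light-tailed clusters.) Let K ≥ 1 and integers d_1,…,d_K ≥ 2. For each k ∈ {1,…,K}, let ℓ_k be a d_k-variate stable tail dependence function in d-norm form, and let S_k = (S_{k1},…,S_{k d_k}) have the ℓ_k-simplex distribution; assume S_1,…,S_K are mutually independent. Let R = (R_1,…,R_K) be a positive random vector, independent of (S_1,…,S_K), such that for each k there exists ε_k > 0 with E[(1/R_k)^{1+ε_k}] < ∞; set b_k = E[1/R_k]. For each k, let (a_{nk}) be positive constants such that n·P(1/S_{k1} > a_{nk} x) → 1/x for all x > 0. Then for every x = (x_{ki})_{1≤k≤K, 1≤i≤d_k} with all x_{ki} > 0, n·(1 − P(1/(R_k S_{ki}) ≤ a_{nk} b_k x_{ki} for all k and i)) → Σ_{k=1}^{K} ℓ_k(1/x_{k1},…,1/x_{k d_k}) as n → ∞. -/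

import Mathlib

open MeasureTheory ProbabilityTheory Filter
open scoped Topology

/-- A `d`-variate stable tail dependence function in d-norm form:
`ℓ x = E[max_i x i * W i]` for some integrable, a.s. positive random variables `W i`,
each with unit mean. -/
def IsDNormStdf {d : ℕ} (ℓ : (Fin d → ℝ) → ℝ) : Prop :=
  ∃ (Ω' : Type) (_ : MeasurableSpace Ω') (μ' : Measure Ω') (W : Fin d → Ω' → ℝ),
    IsProbabilityMeasure μ' ∧
    (∀ i, Measurable (W i)) ∧
    (∀ i, Integrable (W i) μ') ∧
    (∀ i, ∀ᵐ ω ∂μ', 0 < W i ω) ∧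
    (∀ i, ∫ ω, W i ω ∂μ' = 1) ∧
    ∀ x : Fin d → ℝ, ℓ x = ∫ ω, (⨆ i, x i * W i ω) ∂μ'

/-!
Conditionally on `R`, the clusters are independent, and by the survival formula and the
homogeneity of `ℓ k` the `k`-th cluster lies in its target orthant with probability
`(1 - ℓ k (1 / x k) / (a n k * b k * R k))₊ ^ (d k - 1)`. The marginal tail condition forces
`n / a n k → 1 / (d k - 1)`, so `n` times one minus the product of these factors converges to
`∑ k, ℓ k (1 / x k) / (b k * R k)`, under a domination by a multiple of `∑ k, 1 / R k`, which is
integrable by the moment condition. Dominated convergence and `E[1 / R k] = b k` give the limit.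
-/

theorem tendsto_zero_of_tendsto_natCast_mul {u : ℕ → ℝ} {ζ : ℝ}
    (h : Tendsto (fun n : ℕ => (n : ℝ) * u n) atTop (𝓝 ζ)) : Tendsto u atTop (𝓝 0) := by
  have h' := h.mul tendsto_inv_atTop_nhds_zero_nat
  rw [mul_zero] at h'
  refine h'.congr' ?_
  filter_upwards [eventually_ne_atTop 0] with n hn
  field_simp

theorem one_sub_one_sub_pow (t : ℝ) (m : ℕ) :
    1 - (1 - t) ^ m = (∑ j ∈ Finset.range m, (1 - t) ^ j) * t := by
  simpa using (geom_sum_mul_neg (1 - t) m).symm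

theorem tendsto_geom_sum_one_sub (m : ℕ) :
    Tendsto (fun t : ℝ => ∑ j ∈ Finset.range m, (1 - t) ^ j) (𝓝 0) (𝓝 m) := by
  have hcont : Continuous (fun t : ℝ => ∑ j ∈ Finset.range m, (1 - t) ^ j) := by fun_prop
  simpa using hcont.tendsto 0

theorem tendsto_natCast_mul_one_sub_max_pow {t : ℕ → ℝ} {τ : ℝ} (m : ℕ)
    (h : Tendsto (fun n : ℕ => (n : ℝ) * t n) atTop (𝓝 τ)) :
    Tendsto (fun n : ℕ => (n : ℝ) * (1 - max 0 (1 - t n) ^ m)) atTop (𝓝 (m * τ)) := by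
  have ht : Tendsto t atTop (𝓝 0) := tendsto_zero_of_tendsto_natCast_mul h
  have hprod := h.mul ((tendsto_geom_sum_one_sub m).comp ht)
  rw [mul_comm τ] at hprod
  refine hprod.congr' ?_
  filter_upwards [ht.eventually_lt_const one_pos] with n hn
  rw [max_eq_right (by linarith), one_sub_one_sub_pow, Function.comp_apply]
  ring

theorem tendsto_natCast_mul_of_tendsto_natCast_mul_one_sub_max_pow {t : ℕ → ℝ} {β : ℝ}
    {m : ℕ} (hm : m ≠ 0) (ht : ∀ n, 0 ≤ t n)
    (h : Tendsto (fun n : ℕ => (n : ℝ) * (1 - max 0 (1 - t n) ^ m)) atTop (𝓝 β)) :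
    Tendsto (fun n : ℕ => (n : ℝ) * t n) atTop (𝓝 (β / m)) := by
  have hsmall := tendsto_zero_of_tendsto_natCast_mul h
  have hlt : ∀ᶠ n in atTop, t n < 1 := by
    filter_upwards [hsmall.eventually_lt_const one_pos] with n hn
    by_contra! h1
    rw [max_eq_left (by linarith), zero_pow hm] at hn
    simp at hn
  have ht0 : Tendsto t atTop (𝓝 0) := by
    refine squeeze_zero' (Eventually.of_forall ht) ?_ hsmall
    filter_upwards [hlt] with n hn
    rw [max_eq_right (by linarith)]
    linarith [pow_le_of_le_one (by linarith) (by linarith [ht n]) hm (a := 1 - t n)]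
  have hg := (tendsto_geom_sum_one_sub m).comp ht0
  have hm' : (m : ℝ) ≠ 0 := Nat.cast_ne_zero.2 hm
  refine (h.div hg hm').congr' ?_
  filter_upwards [hlt, hg.eventually_ne hm'] with n hn hgn
  simp only [Pi.div_apply, Function.comp_apply] at hgn ⊢
  rw [max_eq_right (by linarith), one_sub_one_sub_pow]
  field_simp

theorem tendsto_natCast_mul_one_sub_prod {ι : Type*} (s : Finset ι) {p : ℕ → ι → ℝ}
    {β : ι → ℝ} (h : ∀ k ∈ s, Tendsto (fun n : ℕ => (n : ℝ) * (1 - p n k)) atTop (𝓝 (β k))) :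
    Tendsto (fun n : ℕ => (n : ℝ) * (1 - ∏ k ∈ s, p n k)) atTop (𝓝 (∑ k ∈ s, β k)) := by
  classical
  induction s using Finset.induction_on with
  | empty => simp
  | insert a s ha ih =>
    have hfirst := h a (Finset.mem_insert_self a s)
    have hs := ih fun k hk => h k (Finset.mem_insert_of_mem hk)
    have hpa : Tendsto (fun n => p n a) atTop (𝓝 1) := by
      simpa using
        (tendsto_const_nhds (x := (1 : ℝ))).sub (tendsto_zero_of_tendsto_natCast_mul hfirst)
    rw [Finset.sum_insert ha]
    convert hfirst.add (hpa.mul hs) using 2 with n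
    · rw [Finset.prod_insert ha]
      ring
    · ring

theorem one_sub_prod_le_sum_one_sub {ι : Type*} (s : Finset ι) {p : ι → ℝ}
    (h0 : ∀ k ∈ s, 0 ≤ p k) (h1 : ∀ k ∈ s, p k ≤ 1) :
    1 - ∏ k ∈ s, p k ≤ ∑ k ∈ s, (1 - p k) := by
  classical
  induction s using Finset.induction_on with
  | empty => simp
  | insert a s ha ih =>
    have hs0 : ∀ k ∈ s, 0 ≤ p k := fun k hk => h0 k (Finset.mem_insert_of_mem hk)
    have hs1 : ∀ k ∈ s, p k ≤ 1 := fun k hk => h1 k (Finset.mem_insert_of_mem hk)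
    have hprod : ∏ k ∈ s, p k ≤ 1 := Finset.prod_le_one hs0 hs1
    rw [Finset.prod_insert ha, Finset.sum_insert ha]
    nlinarith [ih hs0 hs1, h0 a (Finset.mem_insert_self a s), h1 a (Finset.mem_insert_self a s)]

theorem one_sub_max_pow_le (t : ℝ) (m : ℕ) : 1 - max 0 (1 - t) ^ m ≤ m * t := by
  rcases le_total t 1 with h | h
  · rw [max_eq_right (by linarith)]
    have h' := one_add_mul_le_pow (a := -t) (by linarith) m
    simp only [← sub_eq_add_neg, mul_neg] at h'
    linarith
  · rw [max_eq_left (by linarith)]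
    rcases Nat.eq_zero_or_pos m with rfl | hm
    · simp
    · rw [zero_pow hm.ne']
      nlinarith [(Nat.one_le_cast (α := ℝ)).2 hm]

theorem prod_max_one_sub_pow_le_one {ι : Type*} (s : Finset ι) (m : ι → ℕ) {t : ι → ℝ}
    (ht : ∀ k ∈ s, 0 ≤ t k) : ∏ k ∈ s, max 0 (1 - t k) ^ m k ≤ 1 :=
  Finset.prod_le_one (fun k _ => pow_nonneg (le_max_left _ _) _) fun k hk =>
    pow_le_one₀ (le_max_left _ _) (max_le zero_le_one (by linarith [ht k hk]))

theorem one_sub_prod_max_one_sub_pow_le {ι : Type*} (s : Finset ι) (m : ι → ℕ) {t : ι → ℝ}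
    (ht : ∀ k ∈ s, 0 ≤ t k) : 1 - ∏ k ∈ s, max 0 (1 - t k) ^ m k ≤ ∑ k ∈ s, m k * t k :=
  calc 1 - ∏ k ∈ s, max 0 (1 - t k) ^ m k ≤ ∑ k ∈ s, (1 - max 0 (1 - t k) ^ m k) :=
        one_sub_prod_le_sum_one_sub s (fun k _ => pow_nonneg (le_max_left _ _) _) fun k hk =>
          pow_le_one₀ (le_max_left _ _) (max_le zero_le_one (by linarith [ht k hk]))
    _ ≤ ∑ k ∈ s, m k * t k := Finset.sum_le_sum fun k _ => one_sub_max_pow_le _ _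

theorem tendsto_natCast_mul_one_sub_integral_prod_max_pow {Ω ι : Type*} [MeasurableSpace Ω]
    {μ : Measure Ω} [IsProbabilityMeasure μ] [Fintype ι] (m : ι → ℕ) {Z : ι → Ω → ℝ}
    (hZ : ∀ k, Integrable (Z k) μ) (hZ0 : ∀ k, 0 ≤ᵐ[μ] Z k) {α : ℕ → ι → ℝ}
    (hα0 : ∀ n k, 0 ≤ α n k) {γ : ι → ℝ}
    (hα : ∀ k, Tendsto (fun n : ℕ => (n : ℝ) * α n k) atTop (𝓝 (γ k))) :
    Tendsto (fun n : ℕ => (n : ℝ) * (1 - ∫ ω, ∏ k, max 0 (1 - α n k * Z k ω) ^ m k ∂μ))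
      atTop (𝓝 (∑ k, m k * γ k * ∫ ω, Z k ω ∂μ)) := by
  set P : ℕ → Ω → ℝ := fun n ω => ∏ k, max 0 (1 - α n k * Z k ω) ^ m k
  have hP : ∀ n, AEStronglyMeasurable (P n) μ := fun n =>
    Finset.aestronglyMeasurable_fun_prod _ fun k _ => by have := (hZ k).1; fun_prop
  have hP0 : ∀ n ω, 0 ≤ P n ω := fun n ω =>
    Finset.prod_nonneg fun k _ => pow_nonneg (le_max_left _ _) _
  have hP1 : ∀ᵐ ω ∂μ, ∀ n, P n ω ≤ 1 := by
    filter_upwards [ae_all_iff.2 hZ0] with ω hω n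
    exact prod_max_one_sub_pow_le_one _ _ fun k _ => mul_nonneg (hα0 n k) (hω k)
  have hPint : ∀ n, Integrable (P n) μ := fun n =>
    (integrable_const 1).mono' (hP n) (by
      filter_upwards [hP1] with ω hω
      rw [Real.norm_eq_abs, abs_of_nonneg (hP0 n ω)]
      exact hω n)
  have hlim : ∀ᵐ ω ∂μ, Tendsto (fun n : ℕ => (n : ℝ) * (1 - P n ω)) atTop
      (𝓝 (∑ k, m k * γ k * Z k ω)) :=
    Eventually.of_forall fun ω => tendsto_natCast_mul_one_sub_prod _ fun k _ => by
      have hk := (hα k).mul_const (Z k ω)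
      simp only [mul_assoc] at hk
      simpa [mul_assoc] using tendsto_natCast_mul_one_sub_max_pow (m k) hk
  have hbound : ∀ᶠ n : ℕ in atTop, ∀ᵐ ω ∂μ,
      ‖(n : ℝ) * (1 - P n ω)‖ ≤ ∑ k, m k * (γ k + 1) * Z k ω := by
    have hev : ∀ᶠ n : ℕ in atTop, ∀ k, (n : ℝ) * α n k ≤ γ k + 1 :=
      eventually_all.2 fun k => (hα k).eventually (eventually_le_nhds (lt_add_one _))
    filter_upwards [hev] with n hn
    filter_upwards [ae_all_iff.2 hZ0, hP1] with ω hZω hPω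
    rw [Real.norm_eq_abs, abs_of_nonneg (mul_nonneg n.cast_nonneg (by linarith [hPω n]))]
    calc (n : ℝ) * (1 - P n ω) ≤ (n : ℝ) * ∑ k, m k * (α n k * Z k ω) := by
          gcongr
          exact one_sub_prod_max_one_sub_pow_le _ _ fun k _ => mul_nonneg (hα0 n k) (hZω k)
      _ ≤ ∑ k, m k * (γ k + 1) * Z k ω := by
          rw [Finset.mul_sum]
          refine Finset.sum_le_sum fun k _ => ?_
          linarith [mul_le_mul_of_nonneg_left (mul_le_mul_of_nonneg_right (hn k) (hZω k))
            (m k).cast_nonneg (α := ℝ)]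
  have hdom := tendsto_integral_filter_of_dominated_convergence _
    (Eventually.of_forall fun n => by have := hP n; fun_prop) hbound
    (integrable_finsetSum _ fun k _ => (hZ k).const_mul _) hlim
  rw [integral_finsetSum _ fun k _ => (hZ k).const_mul _] at hdom
  simp only [integral_const_mul] at hdom
  refine hdom.congr fun n => ?_
  rw [integral_sub (integrable_const 1) (hPint n), integral_const]
  simp [P]

namespace IsDNormStdf

variable {d : ℕ} {ℓ : (Fin d → ℝ) → ℝ}

theorem nonneg (hℓ : IsDNormStdf ℓ) {s : Fin d → ℝ} (hs : ∀ i, 0 ≤ s i) : 0 ≤ ℓ s := by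
  obtain ⟨Ω', _, μ', W, -, -, -, hWpos, -, hℓ⟩ := hℓ
  rw [hℓ]
  refine integral_nonneg_of_ae ?_
  filter_upwards [ae_all_iff.2 hWpos] with ω hω
  exact Real.iSup_nonneg fun i => mul_nonneg (hs i) (hω i).le

theorem map_smul (hℓ : IsDNormStdf ℓ) {c : ℝ} (hc : 0 ≤ c) (s : Fin d → ℝ) :
    ℓ (c • s) = c * ℓ s := by
  obtain ⟨Ω', _, μ', W, -, -, -, -, -, hℓ⟩ := hℓ
  simp only [hℓ, Pi.smul_apply, smul_eq_mul, ← integral_const_mul, Real.mul_iSup_of_nonneg hc,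
    mul_assoc]

theorem map_zero (hℓ : IsDNormStdf ℓ) : ℓ 0 = 0 := by
  simpa using hℓ.map_smul le_rfl 0

theorem apply_single (hℓ : IsDNormStdf ℓ) (i : Fin d) {u : ℝ} (hu : 0 ≤ u) :
    ℓ (Pi.single i u) = u := by
  obtain ⟨Ω', _, μ', W, -, -, -, hWpos, hWmean, hℓ⟩ := hℓ
  have : Nonempty (Fin d) := ⟨i⟩
  calc ℓ (Pi.single i u) = ∫ ω, u * W i ω ∂μ' := by
        rw [hℓ]
        refine integral_congr_ae ?_
        filter_upwards [ae_all_iff.2 hWpos] with ω hω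
        refine le_antisymm (ciSup_le fun j => ?_) ?_
        · rcases eq_or_ne j i with rfl | hj
          · simp
          · simpa [hj] using mul_nonneg hu (hω i).le
        · simpa using le_ciSup (f := fun j => (Pi.single i u : Fin d → ℝ) j * W j ω)
            (Set.finite_range _).bddAbove i
    _ = u := by rw [integral_const_mul, hWmean, mul_one]

end IsDNormStdf

theorem measureReal_forall_le_of_continuousAt {Ω ι : Type*} [MeasurableSpace Ω]
    {μ : Measure Ω} [IsFiniteMeasure μ] [Countable ι] {S : ι → Ω → ℝ}
    (hS : ∀ i, Measurable (S i)) (hSpos : ∀ᵐ ω ∂μ, ∀ i, 0 < S i ω) {s : ι → ℝ}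
    (hs : ∀ i, 0 ≤ s i) {G : ℝ → ℝ} (hG : ContinuousAt G 1)
    (hF : ∀ c ∈ Set.Ico (0 : ℝ) 1, μ.real {ω | ∀ i, c * s i < S i ω} = G c) :
    μ.real {ω | ∀ i, s i ≤ S i ω} = G 1 := by
  -- the closed orthant is a.s. the decreasing limit of the open orthants at `c n ↑ 1`
  set c : ℕ → ℝ := fun n => 1 - 1 / (n + 1)
  have hc : ∀ n, c n ∈ Set.Ico (0 : ℝ) 1 := fun n => by
    have : 1 / ((n : ℝ) + 1) ≤ 1 := by rw [div_le_one (by positivity)]; linarith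
    exact ⟨by linarith, by simp only [c]; linarith [Nat.one_div_pos_of_nat (α := ℝ) (n := n)]⟩
  have hc_mono : Monotone c := fun n n' h => by
    simp only [c]
    gcongr
  have hc_lim : Tendsto c atTop (𝓝 1) := by
    show Tendsto (fun n : ℕ => 1 - 1 / ((n : ℝ) + 1)) atTop (𝓝 1)
    simpa using (tendsto_const_nhds (x := (1 : ℝ))).sub tendsto_one_div_add_atTop_nhds_zero_nat
  set A : ℕ → Set Ω := fun n => {ω | ∀ i, c n * s i < S i ω}
  have hA : ∀ n, MeasurableSet (A n) := fun n => by
    simp only [A, Set.ofPred_forall]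
    exact .iInter fun i => measurableSet_lt measurable_const (hS i)
  have hA_anti : Antitone A := fun n n' h ω hω i =>
    lt_of_le_of_lt (mul_le_mul_of_nonneg_right (hc_mono h) (hs i)) (hω i)
  have hA_inter : ⋂ n, A n =ᵐ[μ] {ω | ∀ i, s i ≤ S i ω} := by
    rw [Filter.eventuallyEq_set]
    filter_upwards [hSpos] with ω hω
    simp only [A, Set.mem_iInter, Set.mem_ofPred_eq]
    refine ⟨fun h i => ?_, fun h n i => ?_⟩
    · simpa using le_of_tendsto' (hc_lim.mul_const (s i)) fun n => (h n i).le
    · rcases (hs i).eq_or_lt with hsi | hsi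
      · simpa [← hsi] using hω i
      · exact (mul_lt_of_lt_one_left hsi (hc n).2).trans_le (h i)
  have hlim : Tendsto (fun n => μ.real (A n)) atTop (𝓝 (μ.real (⋂ n, A n))) :=
    (ENNReal.tendsto_toReal (measure_ne_top μ _)).comp
      (tendsto_measure_iInter_atTop (fun n => (hA n).nullMeasurableSet) hA_anti
        ⟨0, measure_ne_top μ _⟩)
  rw [← measureReal_congr hA_inter]
  exact tendsto_nhds_unique hlim
    ((hG.tendsto.comp hc_lim).congr fun n => (hF _ (hc n)).symm)

section SimplexDistribution

variable {Ω : Type*} [MeasurableSpace Ω] {μ : Measure Ω} [IsProbabilityMeasure μ] {d m : ℕ}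
  {ℓ : (Fin d → ℝ) → ℝ} {S : Fin d → Ω → ℝ}

variable (hℓ : IsDNormStdf ℓ) (hS : ∀ i, Measurable (S i))
  (hsurv : ∀ s : Fin d → ℝ, (∀ i, 0 ≤ s i) →
    μ.real {ω | ∀ i, s i < S i ω} = max 0 (1 - ℓ s) ^ m)
include hℓ hS hsurv

theorem ae_forall_pos_of_survival : ∀ᵐ ω ∂μ, ∀ i, 0 < S i ω := by
  have h := hsurv 0 fun _ => le_rfl
  simp only [Pi.zero_apply, hℓ.map_zero, sub_zero, max_eq_right zero_le_one, one_pow] at h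
  have hmeas : MeasurableSet {ω | ∀ i, 0 < S i ω} := by
    simp only [Set.ofPred_forall]
    exact .iInter fun i => measurableSet_lt measurable_const (hS i)
  rw [ae_iff_measure_eq hmeas.nullMeasurableSet, measure_univ]
  rwa [measureReal_def, ENNReal.toReal_eq_one_iff] at h

theorem measureReal_forall_mul_le_eq_of_survival {c : ℝ} (hc : 0 ≤ c) {s : Fin d → ℝ}
    (hs : ∀ i, 0 ≤ s i) : μ.real {ω | ∀ i, c * s i ≤ S i ω} = max 0 (1 - c * ℓ s) ^ m := by
  refine measureReal_forall_le_of_continuousAt hS (ae_forall_pos_of_survival hℓ hS hsurv)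
    (fun i => mul_nonneg hc (hs i)) (G := fun c' => max 0 (1 - c' * (c * ℓ s)) ^ m)
    (by fun_prop) (fun c' hc' => ?_) |>.trans (by simp)
  rw [← hℓ.map_smul hc, ← hℓ.map_smul hc'.1]
  exact hsurv _ fun i => mul_nonneg hc'.1 (mul_nonneg hc (hs i))

theorem measureReal_le_eq_of_survival (i : Fin d) {w : ℝ} (hw : 0 ≤ w) :
    μ.real {ω | w ≤ S i ω} = max 0 (1 - w) ^ m := by
  have h := measureReal_forall_mul_le_eq_of_survival hℓ hS hsurv zero_le_one
    (s := Pi.single i w) fun j => (Pi.single_nonneg.2 hw : (0 : Fin d → ℝ) ≤ Pi.single i w) j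
  rw [one_mul, hℓ.apply_single i hw] at h
  rw [← h]
  refine measureReal_congr ?_
  rw [Filter.eventuallyEq_set]
  filter_upwards [ae_forall_pos_of_survival hℓ hS hsurv] with ω hω
  simp only [one_mul]
  refine ⟨fun h j => ?_, fun h => by simpa using h i⟩
  rcases eq_or_ne j i with rfl | hj
  · simpa using h
  · simpa [hj] using (hω j).le

theorem tendsto_natCast_mul_inv_of_tendsto_tail (hm : m ≠ 0) (i : Fin d) {a : ℕ → ℝ}
    (ha : ∀ n, 0 < a n)
    (h : Tendsto (fun n : ℕ => (n : ℝ) * μ.real {ω | a n < 1 / S i ω}) atTop (𝓝 1)) :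
    Tendsto (fun n : ℕ => (n : ℝ) * (a n)⁻¹) atTop (𝓝 (m : ℝ)⁻¹) := by
  have htail : ∀ n, μ.real {ω | a n < 1 / S i ω} = 1 - max 0 (1 - (a n)⁻¹) ^ m := fun n => by
    rw [← measureReal_le_eq_of_survival hℓ hS hsurv i (inv_pos.2 (ha n)).le,
      ← probReal_compl_eq_one_sub (measurableSet_le measurable_const (hS i))]
    refine measureReal_congr ?_
    rw [Filter.eventuallyEq_set]
    filter_upwards [ae_forall_pos_of_survival hℓ hS hsurv] with ω hω
    simp only [Set.mem_ofPred_eq, Set.mem_compl_iff, not_le]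
    rw [lt_one_div (ha n) (hω i), one_div]
  simpa using tendsto_natCast_mul_of_tendsto_natCast_mul_one_sub_max_pow hm
    (fun n => (inv_pos.2 (ha n)).le) (h.congr fun n => by rw [htail])

end SimplexDistribution

theorem integrable_of_integrable_rpow {Ω : Type*} [MeasurableSpace Ω] {μ : Measure Ω}
    [IsFiniteMeasure μ] {f : Ω → ℝ} (hf : AEStronglyMeasurable f μ) (hf0 : 0 ≤ᵐ[μ] f) {p : ℝ}
    (hp : 1 ≤ p) (h : Integrable (fun ω => f ω ^ p) μ) : Integrable f μ := by
  refine ((integrable_const 1).add h).mono' hf ?_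
  filter_upwards [hf0] with ω hω
  rw [Real.norm_eq_abs, abs_of_nonneg hω, Pi.add_apply]
  rcases le_total (f ω) 1 with h1 | h1
  · linarith [Real.rpow_nonneg hω p]
  · linarith [Real.self_le_rpow_of_one_le h1 hp]

theorem integral_pos_of_ae_pos {Ω : Type*} [MeasurableSpace Ω] {μ : Measure Ω} [NeZero μ]
    {f : Ω → ℝ} (hf : Integrable f μ) (hpos : ∀ᵐ ω ∂μ, 0 < f ω) : 0 < ∫ ω, f ω ∂μ := by
  rw [integral_pos_iff_support_of_nonneg_ae (hpos.mono fun _ h => h.le) hf]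
  have hsupp : Function.support f =ᵐ[μ] Set.univ := by
    rw [Filter.eventuallyEq_set]
    filter_upwards [hpos] with ω hω
    simp [hω.ne']
  rw [measure_congr hsupp, Measure.measure_univ_pos]
  exact NeZero.ne μ

theorem ProbabilityTheory.IndepFun.measure_mem_eq_lintegral {Ω α β : Type*}
    [MeasurableSpace Ω] {μ : Measure Ω} [IsFiniteMeasure μ] [MeasurableSpace α]
    [MeasurableSpace β] {X : Ω → α} {Y : Ω → β} (hXY : IndepFun X Y μ) (hX : Measurable X)
    (hY : Measurable Y) {C : Set (α × β)} (hC : MeasurableSet C) :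
    μ {ω | (X ω, Y ω) ∈ C} = ∫⁻ ω, μ.map Y (Prod.mk (X ω) ⁻¹' C) ∂μ := by
  change μ ((fun ω => (X ω, Y ω)) ⁻¹' C) = _
  rw [← Measure.map_apply (hX.prodMk hY) hC,
    (indepFun_iff_map_prod_eq_prod_map_map hX.aemeasurable hY.aemeasurable).1 hXY,
    Measure.prod_apply hC, lintegral_map (measurable_measure_prodMk_left hC) hX]

theorem measureReal_forall_mul_le_eq_integral_prod {Ω ι : Type*} [MeasurableSpace Ω]
    {μ : Measure Ω} [IsProbabilityMeasure μ] [Fintype ι] {κ : ι → Type*}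
    [∀ k, Countable (κ k)] {R : ι → Ω → ℝ} {S : (k : ι) → κ k → Ω → ℝ}
    (hR : ∀ k, Measurable (R k)) (hS : ∀ k i, Measurable (S k i))
    (hSindep : iIndepFun (fun k ω i => S k i ω) μ)
    (hRS : IndepFun (fun ω k => R k ω) (fun ω k i => S k i ω) μ)
    {c : ι → ℝ → ℝ} (hc : ∀ k, Measurable (c k)) (s : (k : ι) → κ k → ℝ) :
    μ.real {ω | ∀ k i, c k (R k ω) * s k i ≤ S k i ω} =
      ∫ ω, ∏ k, μ.real {ω' | ∀ i, c k (R k ω) * s k i ≤ S k i ω'} ∂μ := by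
  let C : Set ((ι → ℝ) × ((k : ι) → κ k → ℝ)) := {q | ∀ k i, c k (q.1 k) * s k i ≤ q.2 k i}
  have hX : Measurable fun ω k => R k ω := measurable_pi_lambda _ hR
  have hY : Measurable fun ω k i => S k i ω :=
    measurable_pi_lambda _ fun k => measurable_pi_lambda _ (hS k)
  have hC : MeasurableSet C := by
    simp only [C, Set.ofPred_forall]
    exact .iInter fun k => .iInter fun i => measurableSet_le (by fun_prop) (by fun_prop)
  have hB : ∀ k (r : ℝ), MeasurableSet {y : κ k → ℝ | ∀ i, c k r * s k i ≤ y i} :=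
    fun k r => by
      simp only [Set.ofPred_forall]
      exact .iInter fun i => measurableSet_le measurable_const (measurable_pi_apply i)
  -- given `R = ρ`, the events of the different clusters are independent
  have hslice : ∀ ρ : ι → ℝ, μ.map (fun ω k i => S k i ω) (Prod.mk ρ ⁻¹' C) =
      ∏ k, μ {ω' | ∀ i, c k (ρ k) * s k i ≤ S k i ω'} := fun ρ => by
    rw [Measure.map_apply hY (measurable_prodMk_left hC)]
    convert hSindep.measure_inter_preimage_eq_mul Finset.univ fun k _ => hB k (ρ k) using 2
    · ext ω
      simp [C]
    · rfl
  have h := hRS.measure_mem_eq_lintegral hX hY hC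
  simp only [hslice] at h
  rw [measureReal_def]
  change (μ {ω | ((fun k => R k ω), (fun k i => S k i ω)) ∈ C}).toReal = _
  rw [h, ← integral_toReal]
  · simp [ENNReal.toReal_prod, measureReal_def]
  · simp only [← hslice]
    exact ((measurable_measure_prodMk_left hC).comp hX).aemeasurable
  · exact Eventually.of_forall fun ω => ENNReal.prod_lt_top fun k _ => measure_lt_top _ _

theorem one_div_mul_le_iff {r σ a y : ℝ} (hr : 0 < r) (hσ : 0 < σ) (ha : 0 < a) (hy : 0 < y) :
    1 / (r * σ) ≤ a * y ↔ (a * r)⁻¹ * (1 / y) ≤ σ := by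
  rw [div_le_iff₀ (mul_pos hr hσ), ← one_div, div_mul_div_comm, one_mul,
    div_le_iff₀ (by positivity)]
  ring_nf

theorem measureReal_forall_one_div_mul_le_eq_integral_prod {Ω ι : Type*} [MeasurableSpace Ω]
    {μ : Measure Ω} [IsProbabilityMeasure μ] [Fintype ι] {κ : ι → Type*}
    [∀ k, Countable (κ k)] {R : ι → Ω → ℝ} {S : (k : ι) → κ k → Ω → ℝ}
    (hR : ∀ k, Measurable (R k)) (hRpos : ∀ k, ∀ᵐ ω ∂μ, 0 < R k ω)
    (hS : ∀ k i, Measurable (S k i)) (hSpos : ∀ k, ∀ᵐ ω ∂μ, ∀ i, 0 < S k i ω)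
    (hSindep : iIndepFun (fun k ω i => S k i ω) μ)
    (hRS : IndepFun (fun ω k => R k ω) (fun ω k i => S k i ω) μ)
    {A : ι → ℝ} (hA : ∀ k, 0 < A k) {y : (k : ι) → κ k → ℝ} (hy : ∀ k i, 0 < y k i)
    {G : ι → ℝ → ℝ}
    (hG : ∀ k c, 0 < c → μ.real {ω | ∀ i, c * (1 / y k i) ≤ S k i ω} = G k c) :
    μ.real {ω | ∀ k i, 1 / (R k ω * S k i ω) ≤ A k * y k i} =
      ∫ ω, ∏ k, G k (A k * R k ω)⁻¹ ∂μ := by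
  have hevent : {ω | ∀ k i, 1 / (R k ω * S k i ω) ≤ A k * y k i} =ᵐ[μ]
      {ω | ∀ k i, (A k * R k ω)⁻¹ * (1 / y k i) ≤ S k i ω} := by
    rw [Filter.eventuallyEq_set]
    filter_upwards [ae_all_iff.2 hRpos, ae_all_iff.2 hSpos] with ω hRω hSω
    exact forall_congr' fun k => forall_congr' fun i =>
      one_div_mul_le_iff (hRω k) (hSω k i) (hA k) (hy k i)
  rw [measureReal_congr hevent, measureReal_forall_mul_le_eq_integral_prod hR hS hSindep hRS
    (c := fun k r => (A k * r)⁻¹) (fun k => by fun_prop)]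
  refine integral_congr_ae ?_
  filter_upwards [ae_all_iff.2 hRpos] with ω hRω
  exact Finset.prod_congr rfl fun k _ => hG k _ (inv_pos.2 (mul_pos (hA k) (hRω k)))

/-- (Joint limit for light-tailed clusters.) -/
theorem stmt_10
    {Ω : Type*} [MeasurableSpace Ω] (μ : Measure Ω) [IsProbabilityMeasure μ]
    (K : ℕ)
    (d : Fin K → ℕ) (hd : ∀ k, 2 ≤ d k)
    (ℓ : (k : Fin K) → (Fin (d k) → ℝ) → ℝ)
    (hℓ : ∀ k, IsDNormStdf (ℓ k))
    (S : (k : Fin K) → Fin (d k) → Ω → ℝ)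
    (hSmeas : ∀ k i, Measurable (S k i))
    (hSsurv : ∀ k, ∀ s : Fin (d k) → ℝ, (∀ i, 0 ≤ s i) →
      (μ {ω | ∀ i, s i < S k i ω}).toReal = max 0 (1 - ℓ k s) ^ (d k - 1))
    (hSindep : iIndepFun (fun k ω i => S k i ω) μ)
    (R : Fin K → Ω → ℝ)
    (hRmeas : ∀ k, Measurable (R k))
    (hRpos : ∀ k, ∀ᵐ ω ∂μ, 0 < R k ω)
    (hRSindep : IndepFun (fun ω k => R k ω) (fun ω k i => S k i ω) μ)
    (ε : Fin K → ℝ) (hε : ∀ k, 0 < ε k)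
    (hmom : ∀ k, Integrable (fun ω => (1 / R k ω) ^ (1 + ε k)) μ)
    (b : Fin K → ℝ) (hb : ∀ k, b k = ∫ ω, 1 / R k ω ∂μ)
    (a : ℕ → Fin K → ℝ) (ha : ∀ n k, 0 < a n k)
    (haS : ∀ k, ∀ x : ℝ, 0 < x →
      Tendsto
        (fun n : ℕ =>
          (n : ℝ) *
            (μ {ω | a n k * x <
              1 / S k (⟨0, by have := hd k; omega⟩ : Fin (d k)) ω}).toReal)
        atTop (𝓝 (1 / x))) :
    ∀ x : (k : Fin K) → Fin (d k) → ℝ, (∀ k i, 0 < x k i) →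
      Tendsto
        (fun n : ℕ =>
          (n : ℝ) * (1 - (μ {ω | ∀ k i,
            1 / (R k ω * S k i ω) ≤ a n k * b k * x k i}).toReal))
        atTop (𝓝 (∑ k, ℓ k (fun i => 1 / x k i))) := by
  intro x hx
  have hm : ∀ k, d k - 1 ≠ 0 := fun k => by have := hd k; omega
  have hSpos k := ae_forall_pos_of_survival (hℓ k) (hSmeas k) (hSsurv k)
  have hrate k := tendsto_natCast_mul_inv_of_tendsto_tail (hℓ k) (hSmeas k) (hSsurv k) (hm k) _
    (ha · k) (by simpa [measureReal_def] using haS k 1 one_pos)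
  have hRinv : ∀ k, Integrable (fun ω => 1 / R k ω) μ := fun k =>
    integrable_of_integrable_rpow (measurable_const.div (hRmeas k)).aestronglyMeasurable
      ((hRpos k).mono fun _ h => (one_div_pos.2 h).le)
      (by linarith [hε k]) (hmom k)
  have hb0 : ∀ k, 0 < b k := fun k =>
    hb k ▸ integral_pos_of_ae_pos (hRinv k) ((hRpos k).mono fun _ h => one_div_pos.2 h)
  set L : Fin K → ℝ := fun k => ℓ k fun i => 1 / x k i
  set Z : Fin K → Ω → ℝ := fun k ω => L k / b k * (1 / R k ω)
  have hevent : ∀ n, μ.real {ω | ∀ k i, 1 / (R k ω * S k i ω) ≤ a n k * b k * x k i} =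
      ∫ ω, ∏ k, max 0 (1 - (a n k)⁻¹ * Z k ω) ^ (d k - 1) ∂μ := fun n => by
    rw [measureReal_forall_one_div_mul_le_eq_integral_prod hRmeas hRpos hSmeas hSpos hSindep
      hRSindep (fun k => mul_pos (ha n k) (hb0 k)) hx fun k c hc =>
        measureReal_forall_mul_le_eq_of_survival (hℓ k) (hSmeas k) (hSsurv k) hc.le
          fun i => (one_div_pos.2 (hx k i)).le]
    congr! 5 with ω k
    simp only [Z]
    ring
  have hlim := tendsto_natCast_mul_one_sub_integral_prod_max_pow (fun k => d k - 1)
    (fun k => (hRinv k).const_mul (L k / b k))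
    (fun k => (hRpos k).mono fun _ h => mul_nonneg
      (div_nonneg ((hℓ k).nonneg fun i => (one_div_pos.2 (hx k i)).le) (hb0 k).le)
      (one_div_pos.2 h).le)
    (fun n k => (inv_pos.2 (ha n k)).le) hrate
  have hsum : ∑ k, ((d k - 1 : ℕ) : ℝ) * ((d k - 1 : ℕ) : ℝ)⁻¹ * ∫ ω, Z k ω ∂μ = ∑ k, L k :=
    Finset.sum_congr rfl fun k _ => by
      rw [integral_const_mul, ← hb k]
      field_simp [hm k, (hb0 k).ne']
  rw [hsum] at hlim
  exact hlim.congr fun n => by rw [← measureReal_def, hevent n]
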